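/- For any two σ-algebras A and B on a probability space, the maximal correlation coefficient and uniform mixing coefficient satisfy ρ(A,B) ≤ 2·√(φ(A,B)). -/

import Mathlib

/-!
For simple functions `f = ∑ aᵢ 1_{Aᵢ}` with `Aᵢ ∈ 𝒜` and `g = ∑ bⱼ 1_{Bⱼ}` with `Bⱼ ∈ ℬ` (both
partitions), the covariance is `∑ aᵢ bⱼ dᵢⱼ` with `dᵢⱼ = μ(Aᵢ ∩ Bⱼ) − μ(Aᵢ) μ(Bⱼ)`. Applying the
definition of `φ` to `Aᵢ` and to the union of the `Bⱼ` on which `dᵢⱼ` has a given sign gives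
`∑ⱼ |dᵢⱼ| ≤ 2 φ μ(Aᵢ)`, while `∑ᵢ |dᵢⱼ| ≤ 2 μ(Bⱼ)` holds for any partitions. Cauchy–Schwarz with the
weights `|dᵢⱼ|` then gives `|cov(f, g)| ≤ 2 √φ ‖f‖₂ ‖g‖₂`, which extends to all of `L²(𝒜) × L²(ℬ)`
by approximating with simple functions.
-/


open MeasureTheory ProbabilityTheory Set Filter
open scoped ENNReal NNReal

/-- Maximal correlation coefficient `ρ(𝒜,ℬ)` between two sub-σ-algebras:
the supremum of `∫ f g dμ` over mean-zero, `L²`-bounded `f, g` measurable with respect to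
`mA`, `mB` respectively. -/
noncomputable def rhoCoeff {Ω : Type*} {mΩ : MeasurableSpace Ω} (μ : Measure Ω)
    (mA mB : MeasurableSpace Ω) : ℝ :=
  sSup {r : ℝ | ∃ f g : Ω → ℝ,
    Measurable[mA] f ∧ Measurable[mB] g ∧ MemLp f 2 μ ∧ MemLp g 2 μ ∧
    (∫ x, f x ∂μ) = 0 ∧ (∫ x, g x ∂μ) = 0 ∧
    (∫ x, (f x) ^ 2 ∂μ) ≤ 1 ∧ (∫ x, (g x) ^ 2 ∂μ) ≤ 1 ∧
    r = ∫ x, f x * g x ∂μ}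

/-- Uniform mixing coefficient `φ(𝒜,ℬ) = sup {|μ(B|A) − μ(B)|}` over `A ∈ mA` with
`μ(A) > 0` and `B ∈ mB`. -/
noncomputable def phiCoeff {Ω : Type*} {mΩ : MeasurableSpace Ω} (μ : Measure Ω)
    (mA mB : MeasurableSpace Ω) : ℝ :=
  sSup {r : ℝ | ∃ A B : Set Ω, MeasurableSet[mA] A ∧ MeasurableSet[mB] B ∧ μ A ≠ 0 ∧
    r = |(μ (A ∩ B)).toReal / (μ A).toReal - (μ B).toReal|}

/-- Absolute regularity coefficient `β(𝒜,ℬ)`: half the supremum over finite measurable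
partitions `{Aᵢ} ⊆ mA`, `{Bⱼ} ⊆ mB` of `∑ᵢ∑ⱼ |μ(Aᵢ ∩ Bⱼ) − μ(Aᵢ)μ(Bⱼ)|`. -/
noncomputable def betaCoeff {Ω : Type*} {mΩ : MeasurableSpace Ω} (μ : Measure Ω)
    (mA mB : MeasurableSpace Ω) : ℝ :=
  sSup {r : ℝ | ∃ (n m : ℕ) (A : Fin n → Set Ω) (B : Fin m → Set Ω),
    (∀ i, MeasurableSet[mA] (A i)) ∧ (∀ j, MeasurableSet[mB] (B j)) ∧
    Pairwise (Function.onFun Disjoint A) ∧ Pairwise (Function.onFun Disjoint B) ∧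
    (⋃ i, A i) = Set.univ ∧ (⋃ j, B j) = Set.univ ∧
    r = (1/2) * ∑ i, ∑ j, |(μ (A i ∩ B j)).toReal - (μ (A i)).toReal * (μ (B j)).toReal|}

open scoped Topology

namespace Finset

lemma sum_abs_le_two_mul_of_forall_subset {ι : Type*} {t : Finset ι} {x : ι → ℝ} {c : ℝ}
    (h : ∀ u ⊆ t, |∑ j ∈ u, x j| ≤ c) : ∑ j ∈ t, |x j| ≤ 2 * c := by
  classical
  have hpos := (le_abs_self _).trans (h (t.filter (0 ≤ x ·)) (filter_subset _ _))
  have hneg := (neg_le_abs _).trans (h (t.filter (¬0 ≤ x ·)) (filter_subset _ _))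
  rw [← sum_filter_add_sum_filter_not t (0 ≤ x ·),
    sum_congr rfl fun j hj => abs_of_nonneg (mem_filter.1 hj).2,
    sum_congr rfl fun j hj => abs_of_neg (not_le.1 (mem_filter.1 hj).2), sum_neg_distrib]
  linarith

lemma abs_sum_sum_mul_le {ι κ : Type*} {s : Finset ι} {t : Finset κ} {a p : ι → ℝ}
    {b q : κ → ℝ} {d : ι → κ → ℝ}
    (hrow : ∀ i ∈ s, ∑ j ∈ t, |d i j| ≤ p i) (hcol : ∀ j ∈ t, ∑ i ∈ s, |d i j| ≤ q j) :
    |∑ i ∈ s, ∑ j ∈ t, a i * b j * d i j|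
      ≤ √(∑ i ∈ s, a i ^ 2 * p i) * √(∑ j ∈ t, b j ^ 2 * q j) := by
  set P := ∑ ij ∈ s ×ˢ t, a ij.1 ^ 2 * |d ij.1 ij.2| with hP_def
  set Q := ∑ ij ∈ s ×ˢ t, b ij.2 ^ 2 * |d ij.1 ij.2| with hQ_def
  have hP : P ≤ ∑ i ∈ s, a i ^ 2 * p i := by
    rw [hP_def, sum_product]
    gcongr with i hi
    simpa only [← mul_sum] using mul_le_mul_of_nonneg_left (hrow i hi) (sq_nonneg (a i))
  have hQ : Q ≤ ∑ j ∈ t, b j ^ 2 * q j := by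
    rw [hQ_def, sum_product_right]
    gcongr with j hj
    simpa only [← mul_sum] using mul_le_mul_of_nonneg_left (hcol j hj) (sq_nonneg (b j))
  have hP0 : 0 ≤ P := sum_nonneg fun _ _ => by positivity
  have hQ0 : 0 ≤ Q := sum_nonneg fun _ _ => by positivity
  have hcs : (∑ ij ∈ s ×ˢ t, a ij.1 * b ij.2 * d ij.1 ij.2) ^ 2 ≤ P * Q :=
    sum_sq_le_sum_mul_sum_of_sq_le_mul _ (fun _ _ => by positivity) (fun _ _ => by positivity)
      fun ij _ => le_of_eq (by rw [mul_pow, mul_pow, ← sq_abs (d ij.1 ij.2)]; ring)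
  rw [← Real.sqrt_mul (hP0.trans hP), ← sum_product']
  exact Real.abs_le_sqrt (hcs.trans (mul_le_mul hP hQ hQ0 (hP0.trans hP)))

end Finset

section Mixing

open Finset

variable {Ω ι : Type*} {mA mB : MeasurableSpace Ω} [m : MeasurableSpace Ω] {μ : Measure Ω}
  [IsProbabilityMeasure μ]

lemma abs_measureReal_inter_div_sub_le_one (A B : Set Ω) :
    |μ.real (A ∩ B) / μ.real A - μ.real B| ≤ 1 := by
  have hcond : μ.real (A ∩ B) / μ.real A ≤ 1 :=
    div_le_one_of_le₀ (measureReal_mono inter_subset_left) measureReal_nonneg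
  have hcond0 : 0 ≤ μ.real (A ∩ B) / μ.real A := by positivity
  rw [abs_sub_le_iff]
  constructor <;> linarith [measureReal_nonneg (μ := μ) (s := B),
    measureReal_le_one (μ := μ) (s := B)]

lemma abs_measureReal_inter_div_sub_le_phiCoeff {A B : Set Ω} (hA : MeasurableSet[mA] A)
    (hB : MeasurableSet[mB] B) (hA0 : μ A ≠ 0) :
    |μ.real (A ∩ B) / μ.real A - μ.real B| ≤ phiCoeff μ mA mB := by
  refine le_csSup ⟨1, ?_⟩ ⟨A, B, hA, hB, hA0, rfl⟩
  rintro _ ⟨A', B', -, -, -, rfl⟩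
  exact abs_measureReal_inter_div_sub_le_one A' B'

lemma phiCoeff_nonneg : 0 ≤ phiCoeff μ mA mB := by
  simpa using abs_measureReal_inter_div_sub_le_phiCoeff (μ := μ)
    (@MeasurableSet.univ _ mA) (@MeasurableSet.empty _ mB) (NeZero.ne _)

lemma abs_measureReal_inter_sub_mul_le_phiCoeff {A B : Set Ω} (hA : MeasurableSet[mA] A)
    (hB : MeasurableSet[mB] B) :
    |μ.real (A ∩ B) - μ.real A * μ.real B| ≤ phiCoeff μ mA mB * μ.real A := by
  by_cases hA0 : μ A = 0
  · simp [measureReal_def, hA0, measure_mono_null inter_subset_left hA0]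
  have hpos : 0 < μ.real A := ENNReal.toReal_pos hA0 (measure_ne_top μ A)
  calc |μ.real (A ∩ B) - μ.real A * μ.real B|
      = |(μ.real (A ∩ B) / μ.real A - μ.real B) * μ.real A| := by
        rw [sub_mul, div_mul_cancel₀ _ hpos.ne', mul_comm]
    _ = |μ.real (A ∩ B) / μ.real A - μ.real B| * μ.real A := by rw [abs_mul, abs_of_pos hpos]
    _ ≤ phiCoeff μ mA mB * μ.real A := by
        gcongr
        exact abs_measureReal_inter_div_sub_le_phiCoeff hA hB hA0

lemma sum_abs_measureReal_inter_sub_mul_le_two_mul_phiCoeff (hmA : mA ≤ m) (hmB : mB ≤ m)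
    {A : Set Ω} (hA : MeasurableSet[mA] A) {t : Finset ι} {G : ι → Set Ω}
    (hG : ∀ j, MeasurableSet[mB] (G j)) (hGd : (t : Set ι).PairwiseDisjoint G) :
    ∑ j ∈ t, |μ.real (A ∩ G j) - μ.real A * μ.real (G j)| ≤ 2 * (phiCoeff μ mA mB * μ.real A) := by
  refine sum_abs_le_two_mul_of_forall_subset fun u hu => ?_
  have hGd' := hGd.subset (coe_subset.2 hu)
  rw [sum_sub_distrib, ← mul_sum, ← measureReal_biUnion_finset hGd' fun j _ => hmB _ (hG j),
    ← measureReal_biUnion_finset (hGd'.mono fun j => inter_subset_right)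
      fun j _ => (hmA _ hA).inter (hmB _ (hG j)), ← inter_iUnion₂]
  exact abs_measureReal_inter_sub_mul_le_phiCoeff hA
    (MeasurableSet.biUnion u.countable_toSet fun j _ => hG j)

lemma sum_abs_measureReal_inter_sub_mul_le_two_mul {B : Set Ω}
    (hB : MeasurableSet B) {s : Finset ι} {F : ι → Set Ω} (hF : ∀ i, MeasurableSet (F i))
    (hFd : (s : Set ι).PairwiseDisjoint F) :
    ∑ i ∈ s, |μ.real (F i ∩ B) - μ.real (F i) * μ.real B| ≤ 2 * μ.real B := by
  have hinter : ∑ i ∈ s, μ.real (F i ∩ B) ≤ μ.real B := by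
    rw [← measureReal_biUnion_finset (μ := μ) (hFd.mono fun i => inter_subset_left)
      fun i _ => (hF i).inter hB]
    exact measureReal_mono (iUnion₂_subset fun i _ => inter_subset_right)
  have hunion : ∑ i ∈ s, μ.real (F i) ≤ 1 := by
    rw [← measureReal_biUnion_finset (μ := μ) hFd fun i _ => hF i]
    exact measureReal_le_one
  calc ∑ i ∈ s, |μ.real (F i ∩ B) - μ.real (F i) * μ.real B|
      ≤ ∑ i ∈ s, (μ.real (F i ∩ B) + μ.real (F i) * μ.real B) := by
        gcongr with i
        exact (abs_sub _ _).trans_eq (by rw [abs_of_nonneg measureReal_nonneg,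
          abs_of_nonneg (by positivity)])
    _ ≤ μ.real B + 1 * μ.real B := by
        rw [sum_add_distrib, ← sum_mul]
        gcongr
    _ = 2 * μ.real B := by ring

end Mixing

section FiniteRange

open Finset

variable {Ω : Type*} {mA mB : MeasurableSpace Ω} [m : MeasurableSpace Ω] {μ : Measure Ω}

lemma integral_comp_eq_sum_of_mem_finset [IsFiniteMeasure μ] {α : Type*} [MeasurableSpace α]
    [MeasurableSingletonClass α] {X : Ω → α} (hX : Measurable X) {s : Finset α}
    (hXs : ∀ x, X x ∈ s) (F : α → ℝ) :
    ∫ x, F (X x) ∂μ = ∑ a ∈ s, μ.real (X ⁻¹' {a}) * F a := by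
  classical
  have hsum : ∀ x, F (X x) = ∑ a ∈ s, (X ⁻¹' {a}).indicator (fun _ => F a) x := fun x => by
    simp [Set.indicator_apply, sum_ite_eq, hXs x]
  simp_rw [hsum]
  rw [integral_finsetSum _ fun a _ =>
    (integrable_const (F a)).indicator (hX (measurableSet_singleton a))]
  simp_rw [integral_indicator_const _ (hX (measurableSet_singleton _)), smul_eq_mul]

variable [IsProbabilityMeasure μ]

lemma abs_integral_mul_sub_le_of_mem_finset (hmA : mA ≤ m) (hmB : mB ≤ m) {f g : Ω → ℝ}
    (hf : Measurable[mA] f) (hg : Measurable[mB] g) {s t : Finset ℝ} (hfs : ∀ x, f x ∈ s)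
    (hgt : ∀ x, g x ∈ t) :
    |∫ x, f x * g x ∂μ - (∫ x, f x ∂μ) * ∫ x, g x ∂μ|
      ≤ 2 * √(phiCoeff μ mA mB) * √(∫ x, f x ^ 2 ∂μ) * √(∫ x, g x ^ 2 ∂μ) := by
  have hf' : Measurable f := hf.mono hmA le_rfl
  have hg' : Measurable g := hg.mono hmB le_rfl
  have hfg : ∫ x, f x * g x ∂μ
      = ∑ a ∈ s, ∑ b ∈ t, μ.real (f ⁻¹' {a} ∩ g ⁻¹' {b}) * (a * b) := by
    have := integral_comp_eq_sum_of_mem_finset (μ := μ) (hf'.prodMk hg')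
      (fun x => mem_product.2 ⟨hfs x, hgt x⟩) (fun p : ℝ × ℝ => p.1 * p.2)
    rw [sum_product] at this
    simpa only [← Set.singleton_prod_singleton, Set.mk_preimage_prod] using this
  have hf1 : ∫ x, f x ∂μ = ∑ a ∈ s, μ.real (f ⁻¹' {a}) * a :=
    integral_comp_eq_sum_of_mem_finset hf' hfs id
  have hg1 : ∫ x, g x ∂μ = ∑ b ∈ t, μ.real (g ⁻¹' {b}) * b :=
    integral_comp_eq_sum_of_mem_finset hg' hgt id
  have hf2 : ∫ x, f x ^ 2 ∂μ = ∑ a ∈ s, μ.real (f ⁻¹' {a}) * a ^ 2 :=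
    integral_comp_eq_sum_of_mem_finset hf' hfs (· ^ 2)
  have hg2 : ∫ x, g x ^ 2 ∂μ = ∑ b ∈ t, μ.real (g ⁻¹' {b}) * b ^ 2 :=
    integral_comp_eq_sum_of_mem_finset hg' hgt (· ^ 2)
  set φ := phiCoeff μ mA mB
  have hcov : ∫ x, f x * g x ∂μ - (∫ x, f x ∂μ) * ∫ x, g x ∂μ = ∑ a ∈ s, ∑ b ∈ t,
      a * b * (μ.real (f ⁻¹' {a} ∩ g ⁻¹' {b}) - μ.real (f ⁻¹' {a}) * μ.real (g ⁻¹' {b})) := by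
    rw [hfg, hf1, hg1, sum_mul_sum, ← sum_sub_distrib]
    refine sum_congr rfl fun a _ => ?_
    rw [← sum_sub_distrib]
    exact sum_congr rfl fun b _ => by ring
  have hrow (a : ℝ) (_ : a ∈ s) : ∑ b ∈ t, |μ.real (f ⁻¹' {a} ∩ g ⁻¹' {b})
      - μ.real (f ⁻¹' {a}) * μ.real (g ⁻¹' {b})| ≤ 2 * φ * μ.real (f ⁻¹' {a}) :=
    (sum_abs_measureReal_inter_sub_mul_le_two_mul_phiCoeff hmA hmB
      (hf (measurableSet_singleton a)) (fun b => hg (measurableSet_singleton b))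
      (Set.pairwiseDisjoint_fiber g _)).trans_eq (mul_assoc _ _ _).symm
  have hcol (b : ℝ) (_ : b ∈ t) : ∑ a ∈ s, |μ.real (f ⁻¹' {a} ∩ g ⁻¹' {b})
      - μ.real (f ⁻¹' {a}) * μ.real (g ⁻¹' {b})| ≤ 2 * μ.real (g ⁻¹' {b}) :=
    sum_abs_measureReal_inter_sub_mul_le_two_mul (hg' (measurableSet_singleton b))
      (fun a => hf' (measurableSet_singleton a)) (Set.pairwiseDisjoint_fiber f _)
  have hX : ∑ a ∈ s, a ^ 2 * (2 * φ * μ.real (f ⁻¹' {a})) = 2 * φ * ∫ x, f x ^ 2 ∂μ := by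
    rw [hf2, mul_sum]
    exact sum_congr rfl fun _ _ => by ring
  have hY : ∑ b ∈ t, b ^ 2 * (2 * μ.real (g ⁻¹' {b})) = 2 * ∫ x, g x ^ 2 ∂μ := by
    rw [hg2, mul_sum]
    exact sum_congr rfl fun _ _ => by ring
  have hsqrt2 : √2 * √2 = 2 := Real.mul_self_sqrt zero_le_two
  rw [hcov]
  refine (abs_sum_sum_mul_le hrow hcol).trans_eq ?_
  rw [hX, hY, Real.sqrt_mul (mul_nonneg zero_le_two phiCoeff_nonneg),
    Real.sqrt_mul zero_le_two, Real.sqrt_mul zero_le_two]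
  linear_combination (√φ * √(∫ x, f x ^ 2 ∂μ) * √(∫ x, g x ^ 2 ∂μ)) * hsqrt2

end FiniteRange

section Approximation

variable {Ω : Type*} {m : MeasurableSpace Ω} {μ : Measure Ω}

lemma MemLp.integral_mul_eq_inner {f g : Ω → ℝ} (hf : MemLp f 2 μ) (hg : MemLp g 2 μ) :
    ∫ x, f x * g x ∂μ = inner ℝ (hf.toLp f) (hg.toLp g) := by
  rw [L2.inner_def]
  refine integral_congr_ae ?_
  filter_upwards [hf.coeFn_toLp, hg.coeFn_toLp] with x hfx hgx
  simp [hfx, hgx, mul_comm]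

lemma tendsto_integral_mul_of_tendsto_eLpNorm {ι : Type*} {l : Filter ι} {u v : ι → Ω → ℝ}
    {f g : Ω → ℝ} (hu : ∀ n, MemLp (u n) 2 μ) (hv : ∀ n, MemLp (v n) 2 μ) (hf : MemLp f 2 μ)
    (hg : MemLp g 2 μ) (hu_lim : Tendsto (fun n => eLpNorm (u n - f) 2 μ) l (𝓝 0))
    (hv_lim : Tendsto (fun n => eLpNorm (v n - g) 2 μ) l (𝓝 0)) :
    Tendsto (fun n => ∫ x, u n x * v n x ∂μ) l (𝓝 (∫ x, f x * g x ∂μ)) := by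
  simp_rw [MemLp.integral_mul_eq_inner (hu _) (hv _), MemLp.integral_mul_eq_inner hf hg]
  exact ((Lp.tendsto_Lp_iff_tendsto_eLpNorm'' _ hu _ hf).2 hu_lim).inner
    ((Lp.tendsto_Lp_iff_tendsto_eLpNorm'' _ hv _ hg).2 hv_lim)

lemma exists_simpleFunc_tendsto_eLpNorm_of_le [m' : MeasurableSpace Ω] (hm : m' ≤ m)
    {f : Ω → ℝ} (hf : Measurable f) (hf2 : MemLp f 2 μ) :
    ∃ u : ℕ → SimpleFunc Ω ℝ, (∀ n, MemLp (u n) 2 μ) ∧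
      Tendsto (fun n => eLpNorm (⇑(u n) - f) 2 μ) atTop (𝓝 0) := by
  have hf2' : MemLp f 2 (μ.trim hm) :=
    ⟨hf.aestronglyMeasurable, by rw [eLpNorm_trim hm hf.stronglyMeasurable]; exact hf2.2⟩
  refine ⟨fun n => SimpleFunc.approxOn f hf (Set.range f ∪ {0}) 0 (by simp) n,
    fun n => memLp_of_memLp_trim hm (SimpleFunc.memLp_approxOn_range hf hf2' n), ?_⟩
  convert SimpleFunc.tendsto_approxOn_range_Lp_eLpNorm ENNReal.ofNat_ne_top hf hf2'.2 using 2 with n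
  exact (eLpNorm_trim hm ((SimpleFunc.stronglyMeasurable _).sub hf.stronglyMeasurable)).symm

end Approximation

theorem abs_integral_mul_sub_le_two_sqrt_phiCoeff {Ω : Type*} {mA mB : MeasurableSpace Ω}
    [m : MeasurableSpace Ω] {μ : Measure Ω} [IsProbabilityMeasure μ] (hmA : mA ≤ m)
    (hmB : mB ≤ m) {f g : Ω → ℝ} (hf : Measurable[mA] f) (hg : Measurable[mB] g)
    (hf2 : MemLp f 2 μ) (hg2 : MemLp g 2 μ) :
    |∫ x, f x * g x ∂μ - (∫ x, f x ∂μ) * ∫ x, g x ∂μ|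
      ≤ 2 * √(phiCoeff μ mA mB) * √(∫ x, f x ^ 2 ∂μ) * √(∫ x, g x ^ 2 ∂μ) := by
  obtain ⟨u, hu2, hu⟩ := exists_simpleFunc_tendsto_eLpNorm_of_le (m' := mA) hmA hf hf2
  obtain ⟨v, hv2, hv⟩ := exists_simpleFunc_tendsto_eLpNorm_of_le (m' := mB) hmB hg hg2
  have h1 : MemLp (fun _ : Ω => (1 : ℝ)) 2 μ := memLp_const 1
  have hconst : Tendsto (fun _ : ℕ => eLpNorm ((fun _ : Ω => (1 : ℝ)) - fun _ => 1) 2 μ)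
      atTop (𝓝 0) := by simp
  have hfg := tendsto_integral_mul_of_tendsto_eLpNorm hu2 hv2 hf2 hg2 hu hv
  have hf1 := tendsto_integral_mul_of_tendsto_eLpNorm hu2 (fun _ => h1) hf2 h1 hu hconst
  have hg1 := tendsto_integral_mul_of_tendsto_eLpNorm hv2 (fun _ => h1) hg2 h1 hv hconst
  have hff := tendsto_integral_mul_of_tendsto_eLpNorm hu2 hu2 hf2 hf2 hu hu
  have hgg := tendsto_integral_mul_of_tendsto_eLpNorm hv2 hv2 hg2 hg2 hv hv
  simp only [mul_one, ← sq] at hf1 hg1 hff hgg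
  refine le_of_tendsto_of_tendsto' (hfg.sub (hf1.mul hg1)).abs
    ((tendsto_const_nhds.mul hff.sqrt).mul hgg.sqrt) fun n => ?_
  exact abs_integral_mul_sub_le_of_mem_finset hmA hmB (@SimpleFunc.measurable _ _ mA _ (u n))
    (@SimpleFunc.measurable _ _ mB _ (v n)) (@SimpleFunc.mem_range_self _ _ mA (u n))
    (@SimpleFunc.mem_range_self _ _ mB (v n))

/-- For any two sub-σ-algebras, `ρ(𝒜,ℬ) ≤ 2 √(φ(𝒜,ℬ))`. -/
theorem rho_le_two_sqrt_phi {Ω : Type*} [m : MeasurableSpace Ω]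
    (μ : Measure Ω) [IsProbabilityMeasure μ]
    (mA mB : MeasurableSpace Ω) (hA : mA ≤ m) (hB : mB ≤ m) :
    rhoCoeff μ mA mB ≤ 2 * Real.sqrt (phiCoeff μ mA mB) := by
  refine Real.sSup_le ?_ (by positivity)
  rintro _ ⟨f, g, hf, hg, hf2, hg2, hf0, -, hff, hgg, rfl⟩
  have hcov := abs_integral_mul_sub_le_two_sqrt_phiCoeff (m := m) hA hB hf hg hf2 hg2
  rw [hf0, zero_mul, sub_zero] at hcov
  calc ∫ x, f x * g x ∂μ
      ≤ 2 * √(phiCoeff μ mA mB) * √(∫ x, f x ^ 2 ∂μ) * √(∫ x, g x ^ 2 ∂μ) :=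
        (le_abs_self _).trans hcov
    _ ≤ 2 * √(phiCoeff μ mA mB) * 1 * 1 := by
        gcongr
        exacts [Real.sqrt_le_one.2 hff, Real.sqrt_le_one.2 hgg]
    _ = 2 * √(phiCoeff μ mA mB) := by ring
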